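/- arXiv:1506.09145 — 3 statements merged into one kernel-verified Lean document; each statement's English description precedes it below -/
import Mathlib

section
/- If a graph G has a weakly leveled planar drawing, then G has layered pathwidth at most 2. -/
open SimpleGraph

universe u

variable {V : Type u}

/-- A `k`-track layout of a graph `G`: a partition of the vertices into `k`
linearly ordered independent sets (tracks, with order given by `pos`),
such that the edges between each pair of tracks are non-crossing. -/
structure TrackLayout (G : SimpleGraph V) (k : ℕ) where
  track : V → Fin k
  pos : V → ℕ
  pos_inj : ∀ u v : V, track u = track v → pos u = pos v → u = v
  indep : ∀ u v : V, G.Adj u v → track u ≠ track v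
  noncross : ∀ u v u' v' : V, G.Adj u v → G.Adj u' v' →
    track u = track u' → track v = track v' →
    pos u < pos u' → ¬ (pos v' < pos v)

/-- The track-number of `G`: the minimum `k` such that `G` has a `k`-track layout. -/
noncomputable def trackNumber (G : SimpleGraph V) : ℕ :=
  sInf {k | Nonempty (TrackLayout G k)}

/-- `δ` of an arc `uv` in a 3-track layout: `+1` if it goes from track `i` to
track `i+1 (mod 3)`, and `-1` otherwise. -/
def trackDelta {G : SimpleGraph V} (T : TrackLayout G 3) (u v : V) : ℤ :=
  if T.track v = T.track u + 1 then 1 else -1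

/-- Sum of `δ` over the arcs of a walk in a 3-track layout. -/
def walkDelta {G : SimpleGraph V} (T : TrackLayout G 3) :
    ∀ {u v : V}, G.Walk u v → ℤ
  | _, _, SimpleGraph.Walk.nil => 0
  | _, _, @SimpleGraph.Walk.cons _ _ a b _ _ p => trackDelta T a b + walkDelta T p

/-- A leveled planar drawing of `G` (combinatorially): vertices assigned to
levels with every edge joining consecutive levels, and vertices linearly
ordered within each level (by `pos`) so that no two edges cross. -/
structure LeveledPlanarDrawing (G : SimpleGraph V) where
  level : V → ℤ
  pos : V → ℕ
  pos_inj : ∀ u v : V, level u = level v → pos u = pos v → u = v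
  edge_level : ∀ u v : V, G.Adj u v → |level u - level v| = 1
  noncross : ∀ u v u' v' : V, G.Adj u v → G.Adj u' v' →
    level u = level u' → level v = level v' →
    pos u < pos u' → ¬ (pos v' < pos v)

/-- A graph is leveled planar if it admits a leveled planar drawing. -/
def IsLeveledPlanar (G : SimpleGraph V) : Prop := Nonempty (LeveledPlanarDrawing G)

/-- A weakly leveled planar drawing of `G`: like a leveled planar drawing,
but edges may also join two consecutive vertices of the same level. -/
structure WeaklyLeveledPlanarDrawing (G : SimpleGraph V) where
  level : V → ℤ
  pos : V → ℕ
  pos_inj : ∀ u v : V, level u = level v → pos u = pos v → u = v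
  edge_level : ∀ u v : V, G.Adj u v → |level u - level v| ≤ 1
  noncross : ∀ u v u' v' : V, G.Adj u v → G.Adj u' v' →
    level u = level u' → level v = level v' → level u ≠ level v →
    pos u < pos u' → ¬ (pos v' < pos v)
  same_level_consecutive : ∀ u v : V, G.Adj u v → level u = level v → pos u < pos v →
    ∀ w : V, level w = level u → ¬ (pos u < pos w ∧ pos w < pos v)

/-- A path decomposition of `G`: a sequence of bags such that every vertex lies in a
nonempty contiguous subsequence of bags and every edge lies in some bag. -/
structure PathDecomp (G : SimpleGraph V) where
  bags : ℕ → Set V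
  mem_bag : ∀ v : V, ∃ i, v ∈ bags i
  contiguous : ∀ (v : V) (i j k : ℕ), i ≤ j → j ≤ k → v ∈ bags i → v ∈ bags k → v ∈ bags j
  edge_bag : ∀ u v : V, G.Adj u v → ∃ i, u ∈ bags i ∧ v ∈ bags i

/-- A layering of `G`: each edge joins vertices in the same or consecutive layers. -/
def IsLayering (G : SimpleGraph V) (lev : V → ℤ) : Prop :=
  ∀ u v : V, G.Adj u v → |lev u - lev v| ≤ 1

/-- `G` has layered pathwidth at most `k`: some path decomposition and layering
where every bag meets every layer in at most `k` vertices. -/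
def LayeredPathwidthLE (G : SimpleGraph V) (k : ℕ) : Prop :=
  ∃ (P : PathDecomp G) (lev : V → ℤ), IsLayering G lev ∧
    ∀ (i : ℕ) (l : ℤ), {v | v ∈ P.bags i ∧ lev v = l}.ncard ≤ k

noncomputable def layeredPathwidth (G : SimpleGraph V) : ℕ :=
  sInf {k | LayeredPathwidthLE G k}

/-- `G` has pathwidth at most `k`: some path decomposition with all bags of size at most `k+1`. -/
def PathwidthLE (G : SimpleGraph V) (k : ℕ) : Prop :=
  ∃ P : PathDecomp G, ∀ i, (P.bags i).ncard ≤ k + 1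

noncomputable def pathwidth (G : SimpleGraph V) : ℕ :=
  sInf {k | PathwidthLE G k}

/-- A tree decomposition of `G`. -/
structure TreeDecomp (G : SimpleGraph V) where
  ι : Type u
  T : SimpleGraph ι
  isTree : T.IsTree
  bags : ι → Set V
  edge_bag : ∀ u v : V, G.Adj u v → ∃ i, u ∈ bags i ∧ v ∈ bags i
  subtree : ∀ v : V, (T.induce {i | v ∈ bags i}).Connected

/-- `G` has layered treewidth at most `k`. -/
def LayeredTreewidthLE (G : SimpleGraph V) (k : ℕ) : Prop :=
  ∃ (D : TreeDecomp G) (lev : V → ℤ), IsLayering G lev ∧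
    ∀ (i : D.ι) (l : ℤ), {v | v ∈ D.bags i ∧ lev v = l}.ncard ≤ k

/-- `G` has tree-depth at most `d`: the vertices embed injectively into a rooted forest
(nodes = nonempty lists, ancestor = prefix) of height at most `d`, with every edge
joining an ancestor-descendant pair. -/
def TreedepthLE (G : SimpleGraph V) (d : ℕ) : Prop :=
  ∃ f : V → List ℕ, Function.Injective f ∧
    (∀ v : V, f v ≠ [] ∧ (f v).length ≤ d) ∧
    ∀ u v : V, G.Adj u v → ((f u <+: f v) ∨ (f v <+: f u))

noncomputable def treedepth (G : SimpleGraph V) : ℕ :=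
  sInf {d | TreedepthLE G d}

/-- A caterpillar: a tree having a path (the spine) containing all non-leaf vertices. -/
def IsCaterpillar (G : SimpleGraph V) : Prop :=
  G.IsTree ∧ ∃ (n : ℕ) (f : ℕ → V),
    (∀ i, i < n → G.Adj (f i) (f (i+1))) ∧
    (∀ i j, i ≤ n → j ≤ n → f i = f j → i = j) ∧
    ∀ v : V, (∃ a b : V, a ≠ b ∧ G.Adj v a ∧ G.Adj v b) → ∃ i, i ≤ n ∧ f i = v

/-- The subgraph of edges between tracks `a` and `b` of a track layout. -/
def betweenTracks (G : SimpleGraph V) {k : ℕ} (T : TrackLayout G k) (a b : Fin k) :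
    SimpleGraph V where
  Adj u v := G.Adj u v ∧
    ((T.track u = a ∧ T.track v = b) ∨ (T.track u = b ∧ T.track v = a))
  symm := by
    constructor
    intro u v h
    exact ⟨h.1.symm, by tauto⟩
  loopless := by
    constructor
    intro u h
    exact G.loopless.irrefl u h.1

/-- Outerplanarity, via one-page book embeddings: the vertices can be linearly
ordered so that no two edges cross. -/
def IsOuterplanar (G : SimpleGraph V) : Prop :=
  ∃ f : V → ℕ, Function.Injective f ∧
    ∀ u v x y : V, G.Adj u v → G.Adj x y →
      ¬ (f u < f x ∧ f x < f v ∧ f v < f y)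

/-- The complete binary tree of height `h`: vertices are binary strings of length
at most `h`, with edges from each string to its one-letter extensions. -/
def completeBinaryTree (h : ℕ) : SimpleGraph {l : List Bool // l.length ≤ h} where
  Adj u v := (∃ b, (v : List Bool) = (u : List Bool) ++ [b]) ∨
    (∃ b, (u : List Bool) = (v : List Bool) ++ [b])
  symm := by constructor; intro u v h'; tauto
  loopless := by
    constructor
    intro u h'
    rcases h' with ⟨b, hb⟩ | ⟨b, hb⟩ <;>
      · have := congrArg List.length hb
        simp at this

/-- Add an apex (universal vertex `none`) to a graph. -/
def apexGraph {α : Type u} (G : SimpleGraph α) : SimpleGraph (Option α) where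
  Adj u v :=
    (∃ a b, u = some a ∧ v = some b ∧ G.Adj a b) ∨
    (u = none ∧ ∃ b, v = some b) ∨
    (v = none ∧ ∃ a, u = some a)
  symm := by
    constructor
    rintro u v (⟨a, b, rfl, rfl, hab⟩ | ⟨rfl, b, rfl⟩ | ⟨h1, a, rfl⟩)
    · exact Or.inl ⟨b, a, rfl, rfl, hab.symm⟩
    · exact Or.inr (Or.inr ⟨rfl, b, rfl⟩)
    · subst h1; exact Or.inr (Or.inl ⟨rfl, a, rfl⟩)
  loopless := by
    constructor
    rintro u (⟨a, b, h1, h2, hab⟩ | ⟨h1, b, h2⟩ | ⟨h1, a, h2⟩)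
    · rw [h1] at h2; cases h2; exact G.loopless.irrefl a hab
    · rw [h1] at h2; cases h2
    · rw [h2] at h1; cases h1

/-!
Orient every edge upward, or rightward within a level, and let `f` precede `e` when an endpoint
of `f` lies strictly left of an endpoint of `e` on a common level. Non-crossing makes this
relation acyclic: climbing from the leftmost vertex of the lowest level, one always reaches an
edge with nothing to its left. Rank the edges along a linear extension and give each vertex the
interval of ranks of its incident edges. If two vertices of one level share a bag but no edge,
the last edge at the left one precedes the first edge at the right one, so their intervals are
disjoint. Hence the two extreme vertices of a bag on a level are adjacent, and since edges within
a level join consecutive vertices, there is no room for a third.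
-/

theorem exists_nat_rank_of_wellFounded {α : Type*} [Finite α] {r : α → α → Prop}
    (hr : WellFounded r) : ∃ t : α → ℕ, ∀ a b, r a b → t a < t b := by
  refine ⟨fun a => {x | Relation.TransGen r x a}.ncard, fun a b hab => ?_⟩
  refine Set.ncard_lt_ncard ?_ (Set.toFinite _)
  refine (Set.ssubset_iff_of_subset fun x hx => hx.tail hab).mpr ⟨a, .single hab, ?_⟩
  exact hr.transGen.irrefl.irrefl a

def PathDecomp.ofIntervals {G : SimpleGraph V} (a b : V → ℕ) (hab : ∀ v, a v ≤ b v)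
    (hadj : ∀ u v, G.Adj u v → ∃ i, (a u ≤ i ∧ i ≤ b u) ∧ (a v ≤ i ∧ i ≤ b v)) :
    PathDecomp G where
  bags i := {v | a v ≤ i ∧ i ≤ b v}
  mem_bag v := ⟨a v, le_rfl, hab v⟩
  contiguous _ _ _ _ hij hjk hi hk := ⟨hi.1.trans hij, hjk.trans hk.2⟩
  edge_bag := hadj

namespace WeaklyLeveledPlanarDrawing

variable {G : SimpleGraph V} (D : WeaklyLeveledPlanarDrawing G)

theorem level_eq_add_one_of_adj {u v : V} (h : G.Adj u v) (hl : D.level u < D.level v) :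
    D.level v = D.level u + 1 := by
  have := abs_le.mp (D.edge_level u v h)
  omega

theorem pos_ne_of_ne {u v : V} (hl : D.level u = D.level v) (h : u ≠ v) : D.pos u ≠ D.pos v :=
  fun hp => h (D.pos_inj u v hl hp)

@[ext]
structure Edge where
  src : V
  tgt : V
  adj : G.Adj src tgt
  upward : D.level src < D.level tgt ∨ D.level src = D.level tgt ∧ D.pos src < D.pos tgt

instance [Finite V] : Finite D.Edge :=
  Finite.of_injective (fun e : D.Edge => (e.src, e.tgt)) fun e f h => by
    simp only [Prod.mk.injEq] at h
    exact Edge.ext h.1 h.2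

variable {D}

def Edge.ends (e : D.Edge) : Set V := {e.src, e.tgt}

theorem Edge.src_mem_ends (e : D.Edge) : e.src ∈ e.ends := Set.mem_insert _ _

theorem Edge.tgt_mem_ends (e : D.Edge) : e.tgt ∈ e.ends := Set.mem_insert_of_mem _ rfl

theorem Edge.adj_of_mem_ends (e : D.Edge) {u v : V} (hu : u ∈ e.ends) (hv : v ∈ e.ends)
    (huv : u ≠ v) : G.Adj u v := by
  rcases hu with rfl | rfl <;> rcases hv with rfl | rfl
  exacts [absurd rfl huv, e.adj, e.adj.symm, absurd rfl huv]

theorem exists_edge_of_adj {u v : V} (h : G.Adj u v) : ∃ e : D.Edge, u ∈ e.ends ∧ v ∈ e.ends := by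
  rcases lt_trichotomy (D.level u) (D.level v) with hl | hl | hl
  · exact ⟨⟨u, v, h, .inl hl⟩, Edge.src_mem_ends _, Edge.tgt_mem_ends _⟩
  · rcases (D.pos_ne_of_ne hl h.ne).lt_or_gt with hp | hp
    · exact ⟨⟨u, v, h, .inr ⟨hl, hp⟩⟩, Edge.src_mem_ends _, Edge.tgt_mem_ends _⟩
    · exact ⟨⟨v, u, h.symm, .inr ⟨hl.symm, hp⟩⟩, Edge.tgt_mem_ends _, Edge.src_mem_ends _⟩
  · exact ⟨⟨v, u, h.symm, .inl hl⟩, Edge.tgt_mem_ends _, Edge.src_mem_ends _⟩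

variable (D)

def LeftOf (f e : D.Edge) : Prop :=
  f ≠ e ∧ ∃ x ∈ f.ends, ∃ y ∈ e.ends, D.level x = D.level y ∧ D.pos x < D.pos y

def Leftmost (s : Set D.Edge) (x : V) : Prop :=
  ∀ e ∈ s, ∀ y ∈ e.ends, D.level y = D.level x → D.pos x ≤ D.pos y

variable {D} {s : Set D.Edge}

theorem not_leftOf_of_leftmost {e : D.Edge} (hleft_src : D.Leftmost s e.src)
    (hleft_tgt : D.Leftmost s e.tgt) : ∀ f ∈ s, ¬ D.LeftOf f e := by
  rintro f hf ⟨-, x, hx, y, hy, hl, hp⟩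
  rcases hy with rfl | rfl
  exacts [hp.not_ge (hleft_src f hf x hx hl), hp.not_ge (hleft_tgt f hf x hx hl)]

theorem not_leftOf_of_leftmost_of_unique {e : D.Edge} (hhor : D.level e.src = D.level e.tgt)
    (hleft : D.Leftmost s e.src) (huniq : ∀ g ∈ s, e.src ∈ g.ends → g = e) :
    ∀ f ∈ s, ¬ D.LeftOf f e := by
  rintro f hf ⟨hfe, x, hx, y, hy, hl, hp⟩
  have hpos : D.pos e.src < D.pos e.tgt := e.upward.resolve_left hhor.not_lt |>.2
  rcases hy with rfl | rfl
  · exact hp.not_ge (hleft f hf x hx hl)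
  have hlx : D.level x = D.level e.src := hl.trans hhor.symm
  rcases lt_trichotomy (D.pos x) (D.pos e.src) with hc | hc | hc
  · exact hc.not_ge (hleft f hf x hx hlx)
  · exact hfe (huniq f hf (D.pos_inj x e.src hlx hc ▸ hx))
  · exact D.same_level_consecutive e.src e.tgt e.adj hhor hpos x hlx ⟨hc, hp⟩

theorem level_src_lt_of_leftmost_tgt {g : D.Edge} (hg : g ∈ s) (hleft : D.Leftmost s g.tgt) :
    D.level g.src < D.level g.tgt :=
  g.upward.resolve_right fun ⟨hl, hp⟩ => hp.not_ge (hleft g hg g.src g.src_mem_ends hl)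

theorem exists_leftmost [Finite V] {x : V} (hx : ∃ e ∈ s, x ∈ e.ends) :
    ∃ m, (∃ e ∈ s, m ∈ e.ends) ∧ D.level m = D.level x ∧ D.pos m ≤ D.pos x ∧
      D.Leftmost s m := by
  obtain ⟨m, ⟨hm, hlm⟩, hmin⟩ := Set.exists_min_image
    {y | (∃ e ∈ s, y ∈ e.ends) ∧ D.level y = D.level x} D.pos (Set.toFinite _) ⟨x, hx, rfl⟩
  exact ⟨m, hm, hlm, hmin x ⟨hx, rfl⟩,
    fun e he y hy hly => hmin y ⟨⟨e, he, hy⟩, hly.trans hlm⟩⟩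

theorem src_eq_of_mem_ends {m : V} (hsource : ∀ g ∈ s, g.tgt ≠ m) {g : D.Edge} (hg : g ∈ s)
    (hm : m ∈ g.ends) : g.src = m :=
  hm.elim Eq.symm fun h => absurd h.symm (hsource g hg)

theorem exists_minimal_of_forall_horizontal {m : V} (hm : ∃ e ∈ s, m ∈ e.ends)
    (hleft : D.Leftmost s m) (hsource : ∀ g ∈ s, g.tgt ≠ m)
    (hhor : ∀ g ∈ s, g.src = m → D.level g.src = D.level g.tgt) :
    ∃ e ∈ s, ∀ f ∈ s, ¬ D.LeftOf f e := by
  obtain ⟨e, he, hme⟩ := hm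
  have hes := src_eq_of_mem_ends hsource he hme
  have hpos (g : D.Edge) (hg : g ∈ s) (hgs : g.src = m) : D.pos m < D.pos g.tgt :=
    hgs ▸ (g.upward.resolve_left (hhor g hg hgs).not_lt).2
  have huniq : ∀ g ∈ s, e.src ∈ g.ends → g = e := by
    intro g hg hmg
    have hgs := src_eq_of_mem_ends hsource hg (hes ▸ hmg)
    have hl : D.level g.tgt = D.level e.tgt := by
      rw [← hhor g hg hgs, ← hhor e he hes, hgs, hes]
    -- Of two distinct rightward edges at `m`, one would jump over the target of the other.
    refine Edge.ext (hgs.trans hes.symm) (by_contra fun hne => ?_)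
    rcases (D.pos_ne_of_ne hl hne).lt_or_gt with hlt | hlt
    · exact D.same_level_consecutive e.src e.tgt e.adj (hhor e he hes) (hes ▸ hpos e he hes) g.tgt
        (by rw [hl, hhor e he hes]) ⟨hes ▸ hpos g hg hgs, hlt⟩
    · exact D.same_level_consecutive g.src g.tgt g.adj (hhor g hg hgs) (hgs ▸ hpos g hg hgs) e.tgt
        (by rw [← hl, hhor g hg hgs]) ⟨hgs ▸ hpos e he hes, hlt⟩
  exact ⟨e, he, not_leftOf_of_leftmost_of_unique (hhor e he hes) (hes ▸ hleft) huniq⟩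

theorem exists_minimal_or_leftmost_above_of_upward [Finite V] {m : V} (hleft : D.Leftmost s m)
    {e : D.Edge} (he : e ∈ s) (hes : e.src = m) (hup : D.level e.src < D.level e.tgt)
    (hmin : ∀ g ∈ s, g.src = m → D.level g.src < D.level g.tgt → D.pos e.tgt ≤ D.pos g.tgt) :
    (∃ e ∈ s, ∀ f ∈ s, ¬ D.LeftOf f e) ∨
      ∃ m', (∃ e ∈ s, m' ∈ e.ends) ∧ D.level m' = D.level m + 1 ∧ D.Leftmost s m' ∧
        ∀ g ∈ s, g.tgt ≠ m' := by
  by_cases htgt : D.Leftmost s e.tgt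
  · exact .inl ⟨e, he, not_leftOf_of_leftmost (hes ▸ hleft) htgt⟩
  simp only [Leftmost, not_forall, not_le] at htgt
  obtain ⟨f, hf, y, hy, hly, hpy⟩ := htgt
  obtain ⟨m', hm', hlm', hpm', hleft'⟩ := exists_leftmost ⟨f, hf, hy⟩
  have hle := D.level_eq_add_one_of_adj e.adj hup
  refine .inr ⟨m', hm', by rw [hlm', hly, hle, hes], hleft', fun g hg hgm => ?_⟩
  have hgup := level_src_lt_of_leftmost_tgt hg (hgm ▸ hleft')
  have hlg : D.level g.src = D.level m := by
    have := D.level_eq_add_one_of_adj g.adj hgup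
    rw [hgm, hlm', hly, hle, hes] at this
    omega
  rcases (hleft g hg g.src g.src_mem_ends hlg).eq_or_lt with hpos | hpos
  · have := hmin g hg (D.pos_inj _ _ hlg hpos.symm) hgup
    rw [hgm] at this
    omega
  · -- `g` would cross `e`, which starts at the leftmost vertex `m` and ends right of `m'`.
    refine D.noncross e.src e.tgt g.src g.tgt e.adj g.adj (by rw [hes, hlg]) ?_ hup.ne
      (hes ▸ hpos) (by rw [hgm]; omega)
    rw [hgm, hlm', hly]

theorem exists_minimal_or_leftmost_above [Finite V] {m : V} (hm : ∃ e ∈ s, m ∈ e.ends)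
    (hleft : D.Leftmost s m) (hsource : ∀ g ∈ s, g.tgt ≠ m) :
    (∃ e ∈ s, ∀ f ∈ s, ¬ D.LeftOf f e) ∨
      ∃ m', (∃ e ∈ s, m' ∈ e.ends) ∧ D.level m' = D.level m + 1 ∧ D.Leftmost s m' ∧
        ∀ g ∈ s, g.tgt ≠ m' := by
  by_cases hup : ∃ g ∈ s, g.src = m ∧ D.level g.src < D.level g.tgt
  · obtain ⟨e, ⟨he, hes, heup⟩, hmin⟩ := Set.exists_min_image
      {g | g ∈ s ∧ g.src = m ∧ D.level g.src < D.level g.tgt} (fun g => D.pos g.tgt)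
      (Set.toFinite _) (let ⟨g, hg, hgs, hgup⟩ := hup; ⟨g, hg, hgs, hgup⟩)
    exact exists_minimal_or_leftmost_above_of_upward hleft he hes heup
      fun g hg hgs hgup => hmin g ⟨hg, hgs, hgup⟩
  · push Not at hup
    exact .inl <| exists_minimal_of_forall_horizontal hm hleft hsource fun g hg hgs =>
      (g.upward.resolve_left (hup g hg hgs).not_gt).1

theorem exists_minimal_of_leftmost [Finite V] (n : ℕ) {m : V} (hm : ∃ e ∈ s, m ∈ e.ends)
    (hleft : D.Leftmost s m) (hsource : ∀ g ∈ s, g.tgt ≠ m)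
    (hbound : ∀ e ∈ s, ∀ y ∈ e.ends, D.level y ≤ D.level m + n) :
    ∃ e ∈ s, ∀ f ∈ s, ¬ D.LeftOf f e := by
  induction n generalizing m with
  | zero =>
    obtain h | ⟨m', ⟨e, he, hm'⟩, hlm', -⟩ := exists_minimal_or_leftmost_above hm hleft hsource
    · exact h
    · have := hbound e he m' hm'
      omega
  | succ n ih =>
    obtain h | ⟨m', hm', hlm', hleft', hsource'⟩ := exists_minimal_or_leftmost_above hm hleft hsource
    · exact h
    · refine ih hm' hleft' hsource' fun e he y hy => ?_
      have := hbound e he y hy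
      omega

variable (D) in
theorem wellFounded_leftOf [Finite V] : WellFounded D.LeftOf := by
  refine WellFounded.wellFounded_iff_has_min.mpr fun s ⟨e, he⟩ => ?_
  have hP : {x | ∃ e ∈ s, x ∈ e.ends}.Nonempty := ⟨e.src, e, he, e.src_mem_ends⟩
  obtain ⟨x, hx, hxmin⟩ := Set.exists_min_image _ D.level (Set.toFinite _) hP
  obtain ⟨y, -, hymax⟩ := Set.exists_max_image _ D.level (Set.toFinite _) hP
  obtain ⟨m, hm, hlm, -, hleft⟩ := exists_leftmost hx
  refine exists_minimal_of_leftmost (D.level y - D.level m).toNat hm hleft (fun g hg hgm => ?_)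
    fun e he z hz => ?_
  · have := level_src_lt_of_leftmost_tgt hg (hgm ▸ hleft)
    have := hxmin g.src ⟨g, hg, g.src_mem_ends⟩
    rw [hgm] at *
    omega
  · have := hymax z ⟨e, he, hz⟩
    omega

theorem adj_of_rank_le {t : D.Edge → ℕ} (ht : ∀ f e, D.LeftOf f e → t f < t e) {p r : V}
    {e f : D.Edge} (hp : p ∈ e.ends) (hr : r ∈ f.ends) (hl : D.level p = D.level r)
    (hpos : D.pos p < D.pos r) (hle : t f ≤ t e) : G.Adj p r := by
  by_cases hef : e = f
  · subst hef
    exact e.adj_of_mem_ends hp hr fun h => hpos.ne (h ▸ rfl)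
  · exact absurd (ht e f ⟨hef, p, hp, r, hr, hl, hpos⟩) hle.not_gt

variable (D) in
theorem ncard_le_two_of_adj [Finite V] {S : Set V} {l : ℤ} (hS : ∀ x ∈ S, D.level x = l)
    (hadj : ∀ p ∈ S, ∀ r ∈ S, D.pos p < D.pos r → G.Adj p r) : S.ncard ≤ 2 := by
  rcases S.eq_empty_or_nonempty with rfl | hne
  · simp
  obtain ⟨p, hp, hpmin⟩ := Set.exists_min_image S D.pos (Set.toFinite _) hne
  obtain ⟨r, hr, hrmax⟩ := Set.exists_max_image S D.pos (Set.toFinite _) hne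
  have hsub : S ⊆ {p, r} := by
    intro q hq
    by_contra hpr
    simp only [Set.mem_insert_iff, Set.mem_singleton_iff, not_or] at hpr
    have hpq : D.pos p < D.pos q := (hpmin q hq).lt_of_ne
      (D.pos_ne_of_ne ((hS p hp).trans (hS q hq).symm) (Ne.symm hpr.1))
    have hqr : D.pos q < D.pos r := (hrmax q hq).lt_of_ne
      (D.pos_ne_of_ne ((hS q hq).trans (hS r hr).symm) hpr.2)
    exact D.same_level_consecutive p r (hadj p hp r hr (hpq.trans hqr))
      ((hS p hp).trans (hS r hr).symm) (hpq.trans hqr) q ((hS q hq).trans (hS p hp).symm)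
      ⟨hpq, hqr⟩
  calc S.ncard ≤ ({p, r} : Set V).ncard := Set.ncard_le_ncard hsub (Set.toFinite _)
    _ ≤ 2 := (Set.ncard_insert_le _ _).trans (by rw [Set.ncard_singleton])

theorem exists_rank_interval [Finite V] (t : D.Edge → ℕ) (k : ℕ) (v : V) :
    ∃ a b : ℕ, a ≤ b ∧ (∀ e : D.Edge, v ∈ e.ends → a ≤ t e ∧ t e ≤ b) ∧
      ((∃ e : D.Edge, v ∈ e.ends ∧ t e = a) ∧ (∃ f : D.Edge, v ∈ f.ends ∧ t f = b) ∨
        a = k ∧ b = k) := by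
  by_cases hv : ∃ e : D.Edge, v ∈ e.ends
  · obtain ⟨e, he, hemin⟩ := Set.exists_min_image _ t (Set.toFinite _) hv
    obtain ⟨f, hf, hfmax⟩ := Set.exists_max_image _ t (Set.toFinite _) hv
    exact ⟨t e, t f, hfmax e he, fun g hg => ⟨hemin g hg, hfmax g hg⟩,
      .inl ⟨⟨e, he, rfl⟩, ⟨f, hf, rfl⟩⟩⟩
  · exact ⟨k, k, le_rfl, fun e he => absurd ⟨e, he⟩ hv, .inr ⟨rfl, rfl⟩⟩

theorem layeredPathwidthLE_two [Finite V] (D : WeaklyLeveledPlanarDrawing G) :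
    LayeredPathwidthLE G 2 := by
  obtain ⟨t, ht⟩ := exists_nat_rank_of_wellFounded D.wellFounded_leftOf
  obtain ⟨N, hN⟩ : ∃ N, ∀ e, t e < N := by
    obtain ⟨M, hM⟩ := (Set.finite_range t).bddAbove
    exact ⟨M + 1, fun e => Nat.lt_succ_of_le (hM ⟨e, rfl⟩)⟩
  obtain ⟨g, hg⟩ := Countable.exists_injective_nat V
  -- Isolated vertices get private bags beyond all edge ranks.
  choose a b hab hinc hends using fun v => exists_rank_interval t (N + g v) v
  refine ⟨PathDecomp.ofIntervals a b hab fun u v huv => ?_, D.level, D.edge_level, fun n l => ?_⟩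
  · obtain ⟨e, hu, hv⟩ := exists_edge_of_adj (D := D) huv
    exact ⟨t e, hinc u e hu, hinc v e hv⟩
  refine D.ncard_le_two_of_adj (fun x hx => hx.2) ?_
  rintro p ⟨⟨hap, hbp⟩, hpl⟩ r ⟨⟨har, hbr⟩, hrl⟩ hpr
  rcases hends p with ⟨-, e, hpe, hte⟩ | ⟨hpa, hpb⟩ <;>
    rcases hends r with ⟨⟨f, hrf, htf⟩, f', -, htf'⟩ | ⟨hra, hrb⟩
  · exact adj_of_rank_le ht hpe hrf (hpl.trans hrl.symm) hpr (by omega)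
  · have := hN e
    omega
  · have := hN f'
    omega
  · exact absurd (hg (by omega : g p = g r)) fun h => hpr.ne (h ▸ rfl)

end WeaklyLeveledPlanarDrawing

theorem layeredPathwidthLE_of_infinite [Infinite V] (G : SimpleGraph V) (k : ℕ) :
    LayeredPathwidthLE G k := by
  -- `Set.ncard` is `0` on infinite sets, so a single bag and a single layer will do.
  refine ⟨PathDecomp.ofIntervals 0 0 (fun _ => le_rfl) fun _ _ _ => ⟨0, by simp⟩, fun _ => 0,
    fun u v _ => by simp, fun i l => ?_⟩
  show {v : V | (0 ≤ i ∧ i ≤ 0) ∧ (0 : ℤ) = l}.ncard ≤ k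
  generalize ((0 ≤ i ∧ i ≤ 0) ∧ (0 : ℤ) = l) = P
  by_cases hP : P <;> simp [hP]

/-- If `G` has a weakly leveled planar drawing, then `G` has layered pathwidth at most 2. -/
theorem stmt5 (G : SimpleGraph V) (h : Nonempty (WeaklyLeveledPlanarDrawing G)) :
    LayeredPathwidthLE G 2 := by
  obtain ⟨D⟩ := h
  cases finite_or_infinite V
  · exact D.layeredPathwidthLE_two
  · exact layeredPathwidthLE_of_infinite G 2
end

section
/- Every n-vertex tree has pathwidth at most log₃(2n+1). -/
open SimpleGraph

universe u

variable {V : Type u}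

/-!
A path decomposition is encoded as an interval model: each vertex gets an interval of positions,
adjacent vertices get overlapping intervals, and the width is the largest number of intervals
through a position.

Assume every forest whose components have at most `s` vertices has a model of width `k`. If every
component of `D - r` has at most `2s + 2` vertices and at most one has more than `s`, then `D`
has a model of width `k + 1` in which `r` is alone in the first bag: place `r` over a model of
the small components, then continue with the large component, rooted recursively at the
neighbour of `r` in it. A tree `C` on at most `3s + 3` vertices has a centroid `r`: every
component of `C - r` has at most `2s + 2` vertices, and at most two have more than `s`. Cutting
off one of those leaves two parts of the kind above, and their rooted models glue back to back
(one of them reversed) along the edge between them. Since `2(3s + 3) + 3 = 3(2s + 3)`, induction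
gives width `k + 1` for forests whose components have `n` vertices with `2n + 3 ≤ 3^(k+1)`.
-/

namespace SimpleGraph

variable {α : Type*} {G : SimpleGraph α} {S T : Set α} {u v x y z : α}

/-- `G` with the edges leaving `S` deleted; unlike `G.induce S` it keeps the vertex type. -/
def restrict (G : SimpleGraph α) (S : Set α) : SimpleGraph α where
  Adj a b := G.Adj a b ∧ a ∈ S ∧ b ∈ S
  symm := ⟨fun _ _ h => ⟨h.1.symm, h.2.2, h.2.1⟩⟩
  loopless := ⟨fun a h => G.loopless.irrefl a h.1⟩

/-- The vertex set of the component of `u` in `G[S]`; it is `{u}` when `u ∉ S`. -/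
def componentIn (G : SimpleGraph α) (S : Set α) (u : α) : Set α :=
  {x | (G.restrict S).Reachable u x}

lemma mem_componentIn_self : u ∈ G.componentIn S u := Reachable.refl u

lemma mem_componentIn_comm : x ∈ G.componentIn S u ↔ u ∈ G.componentIn S x :=
  ⟨Reachable.symm, Reachable.symm⟩

lemma componentIn_subset_of_closed {P : Set α} (hu : u ∈ P)
    (hP : ∀ a b, a ∈ P → a ∈ S → b ∈ S → G.Adj a b → b ∈ P) :
    G.componentIn S u ⊆ P := by
  intro x hx
  replace hx := (reachable_iff_reflTransGen u x).1 hx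
  induction hx with
  | refl => exact hu
  | tail _ hab ih => exact hP _ _ ih hab.2.1 hab.2.2 hab.1

lemma componentIn_subset (hu : u ∈ S) : G.componentIn S u ⊆ S :=
  componentIn_subset_of_closed hu fun _ _ _ _ hb _ => hb

lemma mem_componentIn_of_adj (hx : x ∈ G.componentIn S u) (hxS : x ∈ S) (hyS : y ∈ S)
    (h : G.Adj x y) : y ∈ G.componentIn S u :=
  Reachable.trans (G := G.restrict S) hx (Adj.reachable ⟨h, hxS, hyS⟩)

lemma componentIn_eq (hx : x ∈ G.componentIn S u) : G.componentIn S x = G.componentIn S u := by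
  ext y
  exact ⟨Reachable.trans (G := G.restrict S) hx, Reachable.trans (G := G.restrict S) hx.symm⟩

lemma componentIn_mono (h : S ⊆ T) : G.componentIn S u ⊆ G.componentIn T u :=
  fun _ hx =>
    Reachable.mono (G := G.restrict S) (fun _ _ hab => ⟨hab.1, h hab.2.1, h hab.2.2⟩) hx

lemma disjoint_componentIn (h : y ∉ G.componentIn S x) :
    Disjoint (G.componentIn S x) (G.componentIn S y) :=
  Set.disjoint_left.2 fun _ hzx hzy => h (Reachable.trans (G := G.restrict S) hzx hzy.symm)

lemma IsAcyclic.notMem_componentIn (hac : G.IsAcyclic) (hv : v ∉ S) (hx : G.Adj v x)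
    (hy : G.Adj v y) (hxy : x ≠ y) : y ∉ G.componentIn S x := by
  intro hreach
  have hle : G.restrict S ≤ G.deleteEdges {s(v, x)} := fun a b hab => by
    rw [deleteEdges_adj, Set.mem_singleton_iff, Sym2.eq_iff]
    exact ⟨hab.1, by rintro (⟨rfl, -⟩ | ⟨-, rfl⟩) <;> simp_all [restrict]⟩
  have hvy : (G.deleteEdges {s(v, x)}).Adj v y := by
    rw [deleteEdges_adj, Set.mem_singleton_iff, Sym2.eq_iff]
    exact ⟨hy, by rintro (⟨-, rfl⟩ | ⟨rfl, -⟩) <;> simp_all⟩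
  exact isBridge_iff.1 (isAcyclic_iff_forall_adj_isBridge.1 hac hx)
    (hvy.reachable.trans (Reachable.mono hle hreach).symm)

lemma IsAcyclic.exists_forall_adj_eq (hac : G.IsAcyclic) (hv : v ∉ S) (x : α) :
    ∃ y ∈ G.componentIn S x, ∀ u ∈ G.componentIn S x, G.Adj v u → u = y := by
  by_cases h : ∃ y ∈ G.componentIn S x, G.Adj v y
  · obtain ⟨y, hy, hvy⟩ := h
    refine ⟨y, hy, fun u hu hvu => by_contra fun hne => ?_⟩
    exact hac.notMem_componentIn hv hvy hvu (Ne.symm hne) (componentIn_eq hy ▸ hu)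
  · simp only [not_exists, not_and] at h
    exact ⟨x, mem_componentIn_self, fun u hu hvu => absurd hvu (h u hu)⟩

/-- One step of the walk towards a centroid: from `r` to `y`, the only possible neighbour of `r`
in the component `K` of `x` in `C \ {r}`. -/
lemma componentIn_subset_or_subset {C : Set α} {r : α} (hx : x ∈ C \ {r})
    (hy : ∀ u ∈ G.componentIn (C \ {r}) x, G.Adj r u → u = y)
    (hz : z ∈ C \ {y}) :
    G.componentIn (C \ {y}) z ⊆ C \ G.componentIn (C \ {r}) x ∨
      G.componentIn (C \ {y}) z ⊆ G.componentIn (C \ {r}) x \ {y} := by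
  set K := G.componentIn (C \ {r}) x
  by_cases hrz : r ∈ G.componentIn (C \ {y}) z
  · -- the component of `r` in `C \ {y}` avoids `K`: the only edge from `r` to `K` ends at `y`
    have hout : G.componentIn (C \ {y}) r ⊆ Kᶜ := by
      refine componentIn_subset_of_closed (fun h => (componentIn_subset hx h).2 rfl) ?_
      intro a b ha haS hbS hab hb
      by_cases har : a = r
      · subst har
        exact hbS.2 (hy b hb hab)
      · exact ha (mem_componentIn_of_adj hb (componentIn_subset hx hb) ⟨haS.1, har⟩ hab.symm)
    rw [componentIn_eq (mem_componentIn_comm.1 hrz)]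
    exact Or.inl fun w hw => ⟨(componentIn_subset (componentIn_subset hz hrz) hw).1, hout hw⟩
  · have hzr : z ∈ C \ {r} := ⟨hz.1, fun h => hrz (h ▸ mem_componentIn_self)⟩
    have hsub : G.componentIn (C \ {y}) z ⊆ G.componentIn (C \ {r}) z := by
      refine fun w hw => (componentIn_subset_of_closed
        (P := G.componentIn (C \ {r}) z ∩ G.componentIn (C \ {y}) z)
        ⟨mem_componentIn_self, mem_componentIn_self⟩ ?_ hw).1
      rintro a b ⟨haz, haz'⟩ - hbS hab
      have hbz' := mem_componentIn_of_adj haz' (componentIn_subset hz haz') hbS hab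
      have hbr : b ≠ r := fun h => hrz (h ▸ hbz')
      exact ⟨mem_componentIn_of_adj haz (componentIn_subset hzr haz) ⟨hbS.1, hbr⟩ hab, hbz'⟩
    by_cases hzK : z ∈ K
    · rw [componentIn_eq hzK] at hsub
      exact Or.inr fun w hw => ⟨hsub hw, (componentIn_subset hz hw).2⟩
    · exact Or.inl fun w hw =>
        ⟨(componentIn_subset hz hw).1,
          Set.disjoint_right.1 (disjoint_componentIn hzK) (hsub hw)⟩

theorem IsAcyclic.exists_centroid [Finite α] (hac : G.IsAcyclic) {C : Set α} (hC : C.Nonempty) :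
    ∃ r ∈ C, ∀ x ∈ C \ {r}, 2 * (G.componentIn (C \ {r}) x).ncard ≤ C.ncard := by
  classical
  have hP : ∃ t, ∃ r ∈ C, ∀ x ∈ C \ {r}, (G.componentIn (C \ {r}) x).ncard ≤ t :=
    ⟨C.ncard, hC.some, hC.some_mem, fun x hx =>
      Set.ncard_le_ncard ((componentIn_subset hx).trans Set.sdiff_subset)⟩
  obtain ⟨r, hr, hmin⟩ := Nat.find_spec hP
  refine ⟨r, hr, fun x hx => not_lt.1 fun hbig => ?_⟩
  -- otherwise stepping from `r` into its large component `K` lowers the largest component size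
  set K := G.componentIn (C \ {r}) x
  have hK : K.ncard ≤ Nat.find hP := hmin x hx
  have hKpos : 0 < K.ncard := (Set.ncard_pos (Set.toFinite _)).2 ⟨x, mem_componentIn_self⟩
  have hKC : K ⊆ C := (componentIn_subset hx).trans Set.sdiff_subset
  refine Nat.find_min hP (m := Nat.find hP - 1) (by omega) ?_
  obtain ⟨y, hyK, hy⟩ := hac.exists_forall_adj_eq (v := r) (S := C \ {r}) (by simp) x
  refine ⟨y, hKC hyK, fun z hz => ?_⟩
  rcases componentIn_subset_or_subset hx hy hz with h | h
  · have h₁ : (G.componentIn (C \ {y}) z).ncard ≤ (C \ K).ncard := Set.ncard_le_ncard h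
    have h₂ : (C \ K).ncard = C.ncard - K.ncard := Set.ncard_sdiff hKC
    omega
  · have h₁ : (G.componentIn (C \ {y}) z).ncard ≤ (K \ {y}).ncard := Set.ncard_le_ncard h
    have h₂ : (K \ {y}).ncard = K.ncard - 1 := Set.ncard_sdiff_singleton_of_mem hyK
    omega

lemma eq_and_eq_of_adj_componentIn {D : Set α} {r r' : α} (hx : x ∈ D \ {r})
    (hr' : ∀ u ∈ G.componentIn (D \ {r}) x, G.Adj r u → u = r')
    (hu : u ∈ G.componentIn (D \ {r}) x) (hv : v ∈ D \ G.componentIn (D \ {r}) x)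
    (huv : G.Adj u v) : u = r' ∧ v = r := by
  by_cases hvr : v = r
  · subst hvr
    exact ⟨hr' u hu huv.symm, rfl⟩
  · exact absurd (mem_componentIn_of_adj hu (componentIn_subset hx hu) ⟨hv.1, hvr⟩ huv) hv.2

def AtMostOneLarge (G : SimpleGraph α) (S : Set α) (s : ℕ) : Prop :=
  ∀ x ∈ S, ∀ y ∈ S, s < (G.componentIn S x).ncard → s < (G.componentIn S y).ncard →
    y ∈ G.componentIn S x

lemma atMostOneLarge_of_ncard_le [Finite α] {s : ℕ} (h : S.ncard ≤ 2 * s + 1) :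
    G.AtMostOneLarge S s := by
  intro x hx y hy hxs hys
  by_contra hne
  have := Set.ncard_union_eq (disjoint_componentIn hne)
  have := Set.ncard_le_ncard
    (Set.union_subset (componentIn_subset (G := G) hx) (componentIn_subset (G := G) hy))
  omega

end SimpleGraph

section IntervalModels

variable {α : Type*} {G : SimpleGraph α}

/-- An interval model of `G` on `S` of width `k`: vertex `v` occupies the positions
`lo v, …, hi v` (all below `len`), intervals of adjacent vertices meet, and at most `k` intervals
contain any position. The bags `{v | lo v ≤ i ≤ hi v}` then form a path decomposition. -/
structure IntervalModel (G : SimpleGraph α) (S : Set α) (k : ℕ) where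
  lo : α → ℕ
  hi : α → ℕ
  len : ℕ
  lo_le_hi : ∀ v ∈ S, lo v ≤ hi v
  hi_lt_len : ∀ v ∈ S, hi v < len
  lo_le_hi_of_adj : ∀ u ∈ S, ∀ v ∈ S, G.Adj u v → lo u ≤ hi v
  encard_le : ∀ i, {v ∈ S | lo v ≤ i ∧ i ≤ hi v}.encard ≤ k

namespace IntervalModel

variable {S S₁ S₂ T : Set α} {k : ℕ} {r x y : α}

def bag (M : IntervalModel G S k) (i : ℕ) : Set α := {v ∈ S | M.lo v ≤ i ∧ i ≤ M.hi v}

def IsFirst (M : IntervalModel G S k) (r : α) : Prop :=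
  M.lo r = 0 ∧ ∀ v ∈ S, v ≠ r → 0 < M.lo v

def IsLast (M : IntervalModel G S k) (r : α) : Prop :=
  M.hi r + 1 = M.len ∧ ∀ v ∈ S, v ≠ r → M.hi v + 1 < M.len

def empty : IntervalModel G ∅ k where
  lo _ := 0
  hi _ := 0
  len := 0
  lo_le_hi _ h := h.elim
  hi_lt_len _ h := h.elim
  lo_le_hi_of_adj _ h := h.elim
  encard_le _ := by simp

def restrict (M : IntervalModel G S k) (h : T ⊆ S) : IntervalModel G T k where
  lo := M.lo
  hi := M.hi
  len := M.len
  lo_le_hi v hv := M.lo_le_hi v (h hv)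
  hi_lt_len v hv := M.hi_lt_len v (h hv)
  lo_le_hi_of_adj u hu v hv := M.lo_le_hi_of_adj u (h hu) v (h hv)
  encard_le i := le_trans (Set.encard_le_encard fun _ hv => And.intro (h hv.1) hv.2) (M.encard_le i)

lemma IsFirst.restrict {M : IntervalModel G S k} (hr : M.IsFirst r) (h : T ⊆ S) :
    (M.restrict h).IsFirst r :=
  ⟨hr.1, fun v hv => hr.2 v (h hv)⟩

open Classical in
noncomputable def union (M₁ : IntervalModel G S₁ k) (M₂ : IntervalModel G S₂ k)
    (hno : ∀ u ∈ S₁, ∀ v ∈ S₂, ¬G.Adj u v) : IntervalModel G (S₁ ∪ S₂) k where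
  lo v := if v ∈ S₁ then M₁.lo v else M₂.lo v + M₁.len
  hi v := if v ∈ S₁ then M₁.hi v else M₂.hi v + M₁.len
  len := M₁.len + M₂.len
  lo_le_hi v hv := by
    by_cases h₁ : v ∈ S₁
    · simpa [h₁] using M₁.lo_le_hi v h₁
    · simpa [h₁] using M₂.lo_le_hi v (hv.resolve_left h₁)
  hi_lt_len v hv := by
    by_cases h₁ : v ∈ S₁
    · simpa [h₁] using Nat.lt_add_right _ (M₁.hi_lt_len v h₁)
    · simp only [h₁, if_false]; have := M₂.hi_lt_len v (hv.resolve_left h₁); omega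
  lo_le_hi_of_adj u hu v hv huv := by
    by_cases hu₁ : u ∈ S₁ <;> by_cases hv₁ : v ∈ S₁ <;>
      simp only [hu₁, hv₁, if_true, if_false]
    · exact M₁.lo_le_hi_of_adj u hu₁ v hv₁ huv
    · exact absurd huv (hno u hu₁ v (hv.resolve_left hv₁))
    · exact absurd huv.symm (hno v hv₁ u (hu.resolve_left hu₁))
    · have := M₂.lo_le_hi_of_adj u (hu.resolve_left hu₁) v (hv.resolve_left hv₁) huv
      omega
  encard_le i := by
    by_cases hi : i < M₁.len
    · refine le_trans (Set.encard_le_encard ?_) (M₁.encard_le i)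
      rintro v ⟨hv, hlo, hhi⟩
      by_cases h₁ : v ∈ S₁
      · simp only [h₁, if_true] at hlo hhi; exact ⟨h₁, hlo, hhi⟩
      · simp only [h₁, if_false] at hlo; omega
    · refine le_trans (Set.encard_le_encard ?_) (M₂.encard_le (i - M₁.len))
      rintro v ⟨hv, hlo, hhi⟩
      by_cases h₁ : v ∈ S₁
      · simp only [h₁, if_true] at hhi; have := M₁.hi_lt_len v h₁; omega
      · simp only [h₁, if_false] at hlo hhi
        exact ⟨hv.resolve_left h₁, by omega, by omega⟩

open Classical in
noncomputable def apex (M : IntervalModel G S k) (r : α) :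
    IntervalModel G (insert r S) (k + 1) where
  lo v := if v = r then 0 else M.lo v + 1
  hi v := if v = r then M.len + 1 else M.hi v + 1
  len := M.len + 2
  lo_le_hi v hv := by
    by_cases h : v = r
    · simp [h]
    · simpa [h] using M.lo_le_hi v (hv.resolve_left h)
  hi_lt_len v hv := by
    by_cases h : v = r
    · simp [h]
    · have := M.hi_lt_len v (hv.resolve_left h); simp only [h, if_false]; omega
  lo_le_hi_of_adj u hu v hv huv := by
    by_cases hur : u = r
    · simp [hur]
    by_cases hvr : v = r
    · simp only [hur, hvr, if_true, if_false]
      have := M.lo_le_hi u (hu.resolve_left hur); have := M.hi_lt_len u (hu.resolve_left hur)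
      omega
    simpa [hur, hvr] using M.lo_le_hi_of_adj u (hu.resolve_left hur) v (hv.resolve_left hvr) huv
  encard_le i := by
    calc _ ≤ (insert r (M.bag (i - 1))).encard := Set.encard_le_encard fun v hv' => by
            obtain ⟨hv, hlo, hhi⟩ := hv'
            by_cases h : v = r
            · exact Or.inl h
            · simp only [h, if_false] at hlo hhi
              exact Or.inr ⟨hv.resolve_left h, by omega, by omega⟩
      _ ≤ (M.bag (i - 1)).encard + 1 := Set.encard_insert_le _ _
      _ ≤ k + 1 := by gcongr; exact M.encard_le _
      _ = ((k + 1 : ℕ) : ℕ∞) := by push_cast; rfl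

lemma apex_isFirst (M : IntervalModel G S k) (r : α) : (M.apex r).IsFirst r :=
  ⟨by simp [apex], fun v _ h => by simp [apex, h]⟩

lemma apex_isLast (M : IntervalModel G S k) (r : α) : (M.apex r).IsLast r :=
  ⟨by simp [apex], fun v hv h => by
    simpa [apex, h] using M.hi_lt_len v (hv.resolve_left h)⟩

def reverse (M : IntervalModel G S k) : IntervalModel G S k where
  lo v := M.len - 1 - M.hi v
  hi v := M.len - 1 - M.lo v
  len := M.len
  lo_le_hi v hv := by have := M.lo_le_hi v hv; omega
  hi_lt_len v hv := by have := M.hi_lt_len v hv; omega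
  lo_le_hi_of_adj u hu v hv huv := by
    have := M.lo_le_hi_of_adj v hv u hu huv.symm; omega
  encard_le i := by
    refine le_trans (Set.encard_le_encard ?_) (M.encard_le (M.len - 1 - i))
    rintro v ⟨hv, hlo, hhi⟩
    have := M.lo_le_hi v hv; have := M.hi_lt_len v hv
    exact ⟨hv, by omega, by omega⟩

lemma IsFirst.reverse {M : IntervalModel G S k} (hr : M.IsFirst r) (hrS : r ∈ S) :
    M.reverse.IsLast r := by
  refine ⟨?_, fun v hv hvr => ?_⟩
  · have := M.hi_lt_len r hrS; simp only [IntervalModel.reverse, hr.1]; omega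
  · have := hr.2 v hv hvr; have := M.lo_le_hi v hv; have := M.hi_lt_len v hv
    simp only [IntervalModel.reverse]; omega

open Classical in
noncomputable def join (M₁ : IntervalModel G S₁ k) (M₂ : IntervalModel G S₂ k)
    (hk : 2 ≤ k) (hx : M₁.IsLast x) (hy : M₂.IsFirst y)
    (hxy : ∀ u ∈ S₁, ∀ v ∈ S₂, G.Adj u v → u = x ∧ v = y) :
    IntervalModel G (S₁ ∪ S₂) k where
  lo v := if v ∈ S₁ then M₁.lo v else M₂.lo v + (M₁.len - 1)
  hi v := if v ∈ S₁ then M₁.hi v else M₂.hi v + (M₁.len - 1)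
  len := M₁.len + M₂.len
  lo_le_hi v hv := by
    by_cases h₁ : v ∈ S₁
    · simpa [h₁] using M₁.lo_le_hi v h₁
    · simpa [h₁] using M₂.lo_le_hi v (hv.resolve_left h₁)
  hi_lt_len v hv := by
    by_cases h₁ : v ∈ S₁
    · simpa [h₁] using Nat.lt_add_right _ (M₁.hi_lt_len v h₁)
    · simp only [h₁, if_false]; have := M₂.hi_lt_len v (hv.resolve_left h₁); omega
  lo_le_hi_of_adj u hu v hv huv := by
    by_cases hu₁ : u ∈ S₁ <;> by_cases hv₁ : v ∈ S₁ <;>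
      simp only [hu₁, hv₁, if_true, if_false]
    · exact M₁.lo_le_hi_of_adj u hu₁ v hv₁ huv
    · obtain ⟨rfl, -⟩ := hxy u hu₁ v (hv.resolve_left hv₁) huv
      have := M₁.lo_le_hi u hu₁; have := hx.1; omega
    · obtain ⟨rfl, rfl⟩ := hxy v hv₁ u (hu.resolve_left hu₁) huv.symm
      have := hx.1; have := hy.1; omega
    · have := M₂.lo_le_hi_of_adj u (hu.resolve_left hu₁) v (hv.resolve_left hv₁) huv
      omega
  encard_le i := by
    rcases lt_trichotomy (i + 1) M₁.len with hi | hi | hi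
    · refine le_trans (Set.encard_le_encard ?_) (M₁.encard_le i)
      rintro v ⟨hv, hlo, hhi⟩
      by_cases h₁ : v ∈ S₁
      · simp only [h₁, if_true] at hlo hhi; exact ⟨h₁, hlo, hhi⟩
      · simp only [h₁, if_false] at hlo; omega
    · calc _ ≤ ({x, y} : Set α).encard := Set.encard_le_encard fun v hv' => by
              obtain ⟨hv, hlo, hhi⟩ := hv'
              by_cases h₁ : v ∈ S₁
              · simp only [h₁, if_true] at hhi
                exact Or.inl (by_contra fun h => by have := hx.2 v h₁ h; omega)
              · simp only [h₁, if_false] at hlo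
                exact Or.inr (by_contra fun h => by
                  have := hy.2 v (hv.resolve_left h₁) h; omega)
        _ ≤ ({y} : Set α).encard + 1 := Set.encard_insert_le _ _
        _ ≤ k := by rw [Set.encard_singleton]; exact_mod_cast hk
    · refine le_trans (Set.encard_le_encard ?_) (M₂.encard_le (i - (M₁.len - 1)))
      rintro v ⟨hv, hlo, hhi⟩
      by_cases h₁ : v ∈ S₁
      · simp only [h₁, if_true] at hhi; have := M₁.hi_lt_len v h₁; omega
      · simp only [h₁, if_false] at hlo hhi
        exact ⟨hv.resolve_left h₁, by omega, by omega⟩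

lemma IsFirst.join {M₁ : IntervalModel G S₁ k} {M₂ : IntervalModel G S₂ k} {hk : 2 ≤ k}
    {hx : M₁.IsLast x} {hy : M₂.IsFirst y}
    {hxy : ∀ u ∈ S₁, ∀ v ∈ S₂, G.Adj u v → u = x ∧ v = y}
    (hr : M₁.IsFirst r) (hrS : r ∈ S₁) (hlen : 2 ≤ M₁.len) :
    (M₁.join M₂ hk hx hy hxy).IsFirst r := by
  refine ⟨by simp [IntervalModel.join, hrS, hr.1], fun v hv hvr => ?_⟩
  by_cases h₁ : v ∈ S₁
  · simpa [IntervalModel.join, h₁] using hr.2 v h₁ hvr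
  · simp only [IntervalModel.join, h₁, if_false]; omega

def toPathDecomp (M : IntervalModel G Set.univ k) : PathDecomp G where
  bags := M.bag
  mem_bag v := ⟨M.lo v, trivial, le_rfl, M.lo_le_hi v trivial⟩
  contiguous _ _ _ _ hij hjk hi hk := ⟨trivial, hi.2.1.trans hij, hjk.trans hk.2.2⟩
  edge_bag u v huv := ⟨max (M.lo u) (M.lo v),
    ⟨trivial, le_max_left _ _,
      max_le (M.lo_le_hi u trivial) (M.lo_le_hi_of_adj v trivial u trivial huv.symm)⟩,
    ⟨trivial, le_max_right _ _,
      max_le (M.lo_le_hi_of_adj u trivial v trivial huv) (M.lo_le_hi v trivial)⟩⟩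

lemma ncard_bag_le (M : IntervalModel G S k) (i : ℕ) : (M.bag i).ncard ≤ k :=
  (Set.encard_le_coe_iff_finite_ncard_le.1 (M.encard_le i)).2

end IntervalModel

end IntervalModels

section Construction

variable {α : Type*} [Finite α] {G : SimpleGraph α} {k s : ℕ}

open IntervalModel

theorem nonempty_intervalModel_of_forall_componentIn {S : Set α}
    (h : ∀ x ∈ S, Nonempty (IntervalModel G (G.componentIn S x) k)) :
    Nonempty (IntervalModel G S k) := by
  induction hn : S.ncard using Nat.strong_induction_on generalizing S with
  | _ n ih =>
  rcases S.eq_empty_or_nonempty with rfl | ⟨x, hx⟩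
  · exact ⟨empty⟩
  set C := G.componentIn S x
  have hlt : (S \ C).ncard < n :=
    hn ▸ Set.ncard_lt_ncard ⟨Set.sdiff_subset, fun h => (h hx).2 mem_componentIn_self⟩
  obtain ⟨MC⟩ := h x hx
  obtain ⟨MR⟩ := ih _ hlt (fun y hy =>
    let ⟨M⟩ := h y hy.1; ⟨M.restrict (componentIn_mono Set.sdiff_subset)⟩) rfl
  refine ⟨(MC.union MR fun u hu v hv huv => hv.2 ?_).restrict fun v hv => ?_⟩
  · exact mem_componentIn_of_adj hu (componentIn_subset hx hu) hv.1 huv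
  · exact (em (v ∈ C)).imp id fun hvC => ⟨hv, hvC⟩

theorem SimpleGraph.IsAcyclic.exists_intervalModel_isFirst (hac : G.IsAcyclic) (hk : 1 ≤ k)
    (ih : ∀ A : Set α, (∀ x ∈ A, (G.componentIn A x).ncard ≤ s) →
      Nonempty (IntervalModel G A k))
    (D : Set α) (r : α) (hr : r ∈ D)
    (hsize : ∀ x ∈ D \ {r}, (G.componentIn (D \ {r}) x).ncard ≤ 2 * s + 2)
    (hone : G.AtMostOneLarge (D \ {r}) s) :
    ∃ M : IntervalModel G D (k + 1), M.IsFirst r := by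
  induction hn : D.ncard using Nat.strong_induction_on generalizing D r with
  | _ n ihD =>
  by_cases hbig : ∃ x ∈ D \ {r}, s < (G.componentIn (D \ {r}) x).ncard
  · obtain ⟨x, hx, hxs⟩ := hbig
    set K := G.componentIn (D \ {r}) x
    have hKD : K ⊆ D \ {r} := componentIn_subset hx
    obtain ⟨r', hr'K, hr'⟩ : ∃ y ∈ K, ∀ u ∈ K, G.Adj r u → u = y :=
      hac.exists_forall_adj_eq (by simp) x
    obtain ⟨MA⟩ := ih ((D \ {r}) \ K) fun a ha => le_trans
      (Set.ncard_le_ncard (componentIn_mono Set.sdiff_subset))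
      (not_lt.1 fun has => ha.2 (hone x hx a ha.1 hxs has))
    have hKsize : K.ncard ≤ 2 * s + 2 := hsize x hx
    obtain ⟨MK, hMK⟩ := ihD K.ncard
      (hn ▸ Set.ncard_lt_ncard (hKD.trans_ssubset (Set.sdiff_singleton_ssubset.2 hr))) K r' hr'K
      (fun z hz => (Set.ncard_le_ncard ((componentIn_subset hz).trans Set.sdiff_subset)).trans
        hKsize)
      (atMostOneLarge_of_ncard_le (by rw [Set.ncard_sdiff_singleton_of_mem hr'K]; omega)) rfl
    have hedge :
        ∀ u ∈ insert r ((D \ {r}) \ K), ∀ v ∈ K, G.Adj u v → u = r ∧ v = r' := by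
      intro u hu v hv huv
      have huD : u ∈ D \ K := by
        rcases hu with rfl | hu
        exacts [⟨hr, fun h => (hKD h).2 rfl⟩, ⟨hu.1.1, hu.2⟩]
      exact (eq_and_eq_of_adj_componentIn hx hr' hv huD huv.symm).symm
    have hsub : D ⊆ insert r ((D \ {r}) \ K) ∪ K := fun v hv =>
      (em (v ∈ K)).elim Or.inr fun hvK =>
        Or.inl ((em (v = r)).imp id fun hvr => ⟨⟨hv, hvr⟩, hvK⟩)
    exact ⟨_, ((apex_isFirst MA r).join (hx := apex_isLast MA r) (hy := hMK) (hxy := hedge)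
      (hk := by omega) (Set.mem_insert r _) (by simp [apex])).restrict hsub⟩
  · obtain ⟨MA⟩ := ih (D \ {r}) fun x hx => not_lt.1 fun h => hbig ⟨x, hx, h⟩
    exact ⟨_, (apex_isFirst MA r).restrict fun v hv =>
      (em (v = r)).imp id fun hvr => ⟨hv, hvr⟩⟩

theorem SimpleGraph.IsAcyclic.nonempty_intervalModel_of_ncard_le (hac : G.IsAcyclic)
    (hk : 1 ≤ k)
    (ih : ∀ A : Set α, (∀ x ∈ A, (G.componentIn A x).ncard ≤ s) →
      Nonempty (IntervalModel G A k))
    {C : Set α} (hC : C.ncard ≤ 3 * s + 3) : Nonempty (IntervalModel G C (k + 1)) := by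
  rcases C.eq_empty_or_nonempty with rfl | hne
  · exact ⟨empty⟩
  obtain ⟨r, hr, hcent⟩ := hac.exists_centroid hne
  have hsize : ∀ x ∈ C \ {r}, (G.componentIn (C \ {r}) x).ncard ≤ 2 * s + 2 :=
    fun x hx => by have := hcent x hx; omega
  by_cases hbig : ∃ x ∈ C \ {r}, s < (G.componentIn (C \ {r}) x).ncard
  · -- cut off one large component `K`; the rest has at most one large component left
    obtain ⟨x, hx, hxs⟩ := hbig
    set K := G.componentIn (C \ {r}) x
    have hKC : K ⊆ C \ {r} := componentIn_subset hx
    obtain ⟨r₁, hr₁K, hr₁⟩ : ∃ y ∈ K, ∀ u ∈ K, G.Adj r u → u = y :=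
      hac.exists_forall_adj_eq (by simp) x
    have hKsize : K.ncard ≤ 2 * s + 2 := hsize x hx
    obtain ⟨MK, hMK⟩ := hac.exists_intervalModel_isFirst hk ih K r₁ hr₁K
      (fun z hz => (Set.ncard_le_ncard ((componentIn_subset hz).trans Set.sdiff_subset)).trans
        hKsize)
      (atMostOneLarge_of_ncard_le (by rw [Set.ncard_sdiff_singleton_of_mem hr₁K]; omega))
    have hrest : ((C \ K) \ {r}).ncard + K.ncard ≤ C.ncard - 1 := by
      rw [← Set.ncard_union_eq (Set.disjoint_left.2 fun v hv hvK => hv.1.2 hvK),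
        ← Set.ncard_sdiff_singleton_of_mem hr]
      exact Set.ncard_le_ncard (Set.union_subset (fun v hv => ⟨hv.1.1, hv.2⟩) hKC)
    obtain ⟨MD, hMD⟩ := hac.exists_intervalModel_isFirst hk ih (C \ K) r
      ⟨hr, fun h => (hKC h).2 rfl⟩
      (fun z hz => le_trans (Set.ncard_le_ncard (componentIn_mono
        (Set.sdiff_subset_sdiff_left Set.sdiff_subset))) (hsize z ⟨hz.1.1, hz.2⟩))
      (atMostOneLarge_of_ncard_le (by omega))
    exact ⟨(MK.reverse.join MD (by omega) (hMK.reverse hr₁K) hMD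
      fun u hu v hv huv => eq_and_eq_of_adj_componentIn hx hr₁ hu hv huv).restrict
      fun v hv => (em (v ∈ K)).imp id fun hvK => ⟨hv, hvK⟩⟩
  · obtain ⟨M, -⟩ := hac.exists_intervalModel_isFirst hk ih C r hr hsize
      fun x hx _ _ hxs _ => absurd ⟨x, hx, hxs⟩ hbig
    exact ⟨M⟩

theorem SimpleGraph.IsAcyclic.nonempty_intervalModel (hac : G.IsAcyclic) (k : ℕ) {S : Set α}
    (hS : ∀ x ∈ S, 2 * (G.componentIn S x).ncard + 3 ≤ 3 ^ (k + 1)) :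
    Nonempty (IntervalModel G S (k + 1)) := by
  induction k generalizing S with
  | zero =>
    obtain rfl : S = ∅ := Set.eq_empty_of_forall_notMem fun x hx => by
      have := hS x hx
      have := (Set.ncard_pos (Set.toFinite _)).2 ⟨x, mem_componentIn_self (G := G) (S := S)⟩
      omega
    exact ⟨empty⟩
  | succ k ih =>
    obtain ⟨s, hs⟩ : ∃ s, 2 * s + 3 = 3 ^ (k + 1) := by
      obtain ⟨t, ht⟩ := (Odd.pow (by decide : Odd 3) : Odd (3 ^ (k + 1)))
      have : 3 ≤ 3 ^ (k + 1) := Nat.le_self_pow (Nat.succ_ne_zero k) 3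
      exact ⟨t - 1, by omega⟩
    refine nonempty_intervalModel_of_forall_componentIn fun x hx =>
      hac.nonempty_intervalModel_of_ncard_le (s := s) (by omega)
        (fun A hA => ih fun y hy => by have := hA y hy; omega) ?_
    have := hS x hx
    rw [pow_succ, ← hs] at this
    omega

end Construction

lemma two_mul_add_three_le_pow_log (n : ℕ) : 2 * n + 3 ≤ 3 ^ (Nat.log 3 (2 * n + 1) + 1) := by
  have hlt := Nat.lt_pow_succ_log_self (by norm_num : 1 < 3) (2 * n + 1)
  obtain ⟨t, ht⟩ := (Odd.pow (by decide : Odd 3) : Odd (3 ^ (Nat.log 3 (2 * n + 1) + 1)))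
  omega

/-- Every `n`-vertex tree has pathwidth at most `log₃(2n+1)`. -/
theorem stmt8 (G : SimpleGraph V) [Fintype V] (hG : G.IsTree) :
    ∃ P : PathDecomp G, ∀ i : ℕ,
      ((P.bags i).ncard : ℝ) ≤ Real.logb 3 (2 * Fintype.card V + 1) + 1 := by
  set n := Fintype.card V
  set k := Nat.log 3 (2 * n + 1)
  obtain ⟨M⟩ := hG.isAcyclic.nonempty_intervalModel k (S := Set.univ) fun x _ => by
    have := Set.ncard_le_card (G.componentIn Set.univ x)
    have : 2 * n + 3 ≤ 3 ^ (k + 1) := two_mul_add_three_le_pow_log n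
    rw [Nat.card_eq_fintype_card] at *
    omega
  have hlog : (k : ℝ) ≤ Real.logb 3 (2 * n + 1) := by
    exact_mod_cast Real.natLog_le_logb (2 * n + 1) 3
  refine ⟨M.toPathDecomp, fun i => ?_⟩
  have hbag : ((M.bag i).ncard : ℝ) ≤ k + 1 := by exact_mod_cast M.ncard_bag_le i
  exact hbag.trans (by linarith)
end

section
/- For a connected bipartite outerplanar graph G with a fixed vertex v, every bounded face cycle C of an outerplanar embedding of G contains a unique vertex at minimum distance from v, and the distances from v increase monotonically along both paths of C from this nearest vertex to a unique farthest vertex. -/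
open SimpleGraph

universe u

variable {V : Type u}

/-!
Place the vertices on the spine of the one-page book embedding `f` and close the spine up into a
circle: every edge `pq` becomes a chord, and `UnderArc f p q` is one of its two sides. That edges
do not cross says exactly that an edge disjoint from `pq` has both ends on the same side of `pq`,
so a walk avoiding `p` and `q` never changes sides.

Since `G` is bipartite and connected, adjacent vertices have different distances from `r`, so it
suffices to show that the distance has only one valley along `c`: two peaks would force two
valleys, one on each arc of `c` between them. Let `s` be a valley with `d(r, s) > 0` and let `x` be
a neighbour of `s` closer to `r`; `x` is off `c` because `c` is chordless. One of the two edges of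
`c` at `s` separates `x` from the rest of `c`. A shortest path from `x` to `r` cannot pass through
the ends of that edge, which are within distance one of `s` and hence not closer to `r` than `x`;
so the edge separates `r` from `c` too. Distinct edges of `c` never separate the same vertex from
`c`, so two valleys would be the two ends of one edge of `c`, which is absurd.
-/

namespace SimpleGraph

variable {G : SimpleGraph V}

section Distance

variable {r x y : V}

theorem Connected.exists_adj_dist_add_one_eq (hconn : G.Connected) (hx : G.dist r x ≠ 0) :
    ∃ y, G.Adj x y ∧ G.dist r y + 1 = G.dist r x := by
  obtain ⟨W, hW⟩ := hconn.exists_walk_length_eq_dist x r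
  rw [dist_comm] at hW
  cases W with
  | nil => exact absurd hW.symm hx
  | cons hxy W =>
    have hle : G.dist r _ ≤ W.length := dist_comm (G := G) ▸ dist_le W
    rw [Walk.length_cons] at hW
    refine ⟨_, hxy, ?_⟩
    rcases hxy.diff_dist_adj (u := r) with h | h | h <;> omega

theorem Connected.dist_ne_of_adj (hconn : G.Connected) (hbip : G.Colorable 2) (r : V)
    (hxy : G.Adj x y) : G.dist r x ≠ G.dist r y := by
  intro h
  obtain ⟨p, hp⟩ := hconn.exists_walk_length_eq_dist r x
  obtain ⟨q, hq⟩ := hconn.exists_walk_length_eq_dist r y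
  have hloop := two_colorable_iff_forall_loop_even.mp hbip r ((p.concat hxy).append q.reverse)
  rw [Walk.length_append, Walk.length_concat, Walk.length_reverse, hp, hq, ← h] at hloop
  exact Nat.not_even_iff_odd.mpr ⟨G.dist r x, by ring⟩ hloop

theorem Walk.dist_lt_of_mem_support {W : G.Walk x y} (hW : W.length = G.dist x y)
    {g : V} (hg : g ∈ W.support) (hgx : g ≠ x) : G.dist g y < G.dist x y := by
  classical
  have hsplit := congrArg Walk.length (W.take_spec hg)
  rw [Walk.length_append] at hsplit
  have hpos : 0 < (W.takeUntil g hg).length :=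
    Walk.not_nil_iff_lt_length.mp (Walk.not_nil_of_ne hgx.symm)
  have := dist_le (W.dropUntil g hg)
  omega

end Distance

namespace Walk

variable {α : Type*} [LinearOrder α] {u v z z' : V}

/-- Peaks of `g` along `c` are the valleys of `OrderDual.toDual ∘ g`. -/
def IsValley (c : G.Walk u v) (g : V → α) (m : V) : Prop :=
  ∀ y, s(m, y) ∈ c.edges → g m < g y

theorem exists_forall_lt_of_isValley_unique (c : G.Walk u v) {g : V → α}
    (hg : ∀ x y, s(x, y) ∈ c.edges → g x ≠ g y)
    (huniq : ∀ m ∈ c.support, ∀ m' ∈ c.support, c.IsValley g m → c.IsValley g m' → m = m') :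
    ∃ m ∈ c.support, (∀ w ∈ c.support, w ≠ m → g m < g w) ∧
      ∀ w ∈ c.support, w ≠ m → ∃ y, s(w, y) ∈ c.edges ∧ g y < g w := by
  classical
  have hvalley : ∀ w, (∀ y, s(w, y) ∈ c.edges → g w ≤ g y) → c.IsValley g w :=
    fun w h y hy => (h y hy).lt_of_ne (hg w y hy)
  obtain ⟨m, hm, hmin⟩ := c.support.toFinset.exists_min_image g ⟨u, by simp⟩
  rw [List.mem_toFinset] at hm
  have hmin' : ∀ w ∈ c.support, g m ≤ g w := fun w hw => hmin w (List.mem_toFinset.mpr hw)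
  have hm_valley : c.IsValley g m :=
    hvalley m fun y hy => hmin' y (c.snd_mem_support_of_mem_edges hy)
  refine ⟨m, hm, fun w hw hwm => (hmin' w hw).lt_of_ne fun h => hwm ?_, fun w hw hwm => ?_⟩
  · refine huniq w hw m hm (hvalley w fun y hy => ?_) hm_valley
    exact h ▸ hmin' y (c.snd_mem_support_of_mem_edges hy)
  · by_contra! h
    exact hwm (huniq w hw m hm (hvalley w h) hm_valley)

theorem isValley_iff_of_mem_edges_iff {u' v' : V} {c : G.Walk u v} {c' : G.Walk u' v'}
    (h : ∀ e, e ∈ c.edges ↔ e ∈ c'.edges) {g : V → α} {m : V} :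
    c.IsValley g m ↔ c'.IsValley g m := by
  simp only [IsValley, h]

theorem IsCycle.eq_or_eq_of_mem_support_append {A : G.Walk z z'} {B : G.Walk z' z}
    (hc : (A.append B).IsCycle) {y : V} (hA : y ∈ A.support) (hB : y ∈ B.support) :
    y = z ∨ y = z' := by
  have hnodup := hc.support_nodup
  rw [tail_support_append, List.nodup_append] at hnodup
  rw [mem_support_iff] at hA hB
  by_contra! h
  exact hnodup.2.2 y (hA.resolve_left h.1) y (hB.resolve_left h.2) rfl

open OrderDual in
theorem IsCycle.exists_isValley_mem_support_left {A : G.Walk z z'} {B : G.Walk z' z}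
    (hc : (A.append B).IsCycle) (hne : z ≠ z') {g : V → α}
    (hg : ∀ x y, s(x, y) ∈ (A.append B).edges → g x ≠ g y)
    (hz : (A.append B).IsValley (toDual ∘ g) z) (hz' : (A.append B).IsValley (toDual ∘ g) z') :
    ∃ m ∈ A.support, m ≠ z ∧ m ≠ z' ∧ (A.append B).IsValley g m := by
  classical
  have hAc : ∀ {e}, e ∈ A.edges → e ∈ (A.append B).edges := fun h => by
    rw [edges_append]; exact List.mem_append_left _ h
  obtain ⟨m, hm, hmin⟩ := A.support.toFinset.exists_min_image g ⟨z, by simp⟩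
  rw [List.mem_toFinset] at hm
  have hmin' : ∀ w ∈ A.support, g m ≤ g w := fun w hw => hmin w (List.mem_toFinset.mpr hw)
  have hA : ¬ A.Nil := not_nil_of_ne hne
  have hmz : m ≠ z := by
    rintro rfl
    have he := A.mk_start_snd_mem_edges hA
    exact (hmin' _ (A.snd_mem_support_of_mem_edges he)).not_gt (hz _ (hAc he))
  have hmz' : m ≠ z' := by
    rintro rfl
    have he := A.mk_penultimate_end_mem_edges hA
    rw [Sym2.eq_swap] at he
    exact (hmin' _ (A.snd_mem_support_of_mem_edges he)).not_gt (hz' _ (hAc he))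
  refine ⟨m, hm, hmz, hmz', fun y hy => ?_⟩
  have hyA : s(m, y) ∈ A.edges := by
    rw [edges_append, List.mem_append] at hy
    refine hy.resolve_right fun hyB => ?_
    rcases hc.eq_or_eq_of_mem_support_append hm (B.fst_mem_support_of_mem_edges hyB) with h | h
    exacts [hmz h, hmz' h]
  exact (hmin' y (A.snd_mem_support_of_mem_edges hyA)).lt_of_ne (hg m y (hAc hyA))

open OrderDual in
theorem IsCycle.isValley_toDual_unique {c : G.Walk v v} (hc : c.IsCycle) {g : V → α}
    (hg : ∀ x y, s(x, y) ∈ c.edges → g x ≠ g y)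
    (huniq : ∀ m ∈ c.support, ∀ m' ∈ c.support, c.IsValley g m → c.IsValley g m' → m = m') :
    ∀ z ∈ c.support, ∀ z' ∈ c.support,
      c.IsValley (toDual ∘ g) z → c.IsValley (toDual ∘ g) z' → z = z' := by
  classical
  intro z hz z' hz' hpz hpz'
  by_contra hne
  have hz'c : z' ∈ (c.rotate z hz).support := (c.mem_support_rotate_iff z hz).mpr hz'
  set A := (c.rotate z hz).takeUntil z' hz'c
  set B := (c.rotate z hz).dropUntil z' hz'c
  have hAB : (A.append B).IsCycle := by rw [take_spec]; exact hc.rotate hz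
  have hedges : ∀ e, e ∈ (A.append B).edges ↔ e ∈ c.edges := by
    intro e; rw [take_spec]; exact (c.rotate_edges z hz).perm.mem_iff
  have hedges' : ∀ e, e ∈ (B.reverse.append A.reverse).edges ↔ e ∈ c.edges := by
    intro e; rw [← reverse_append, edges_reverse, List.mem_reverse, hedges]
  obtain ⟨m, hmA, hmz, hmz', hm⟩ := hAB.exists_isValley_mem_support_left hne
    (fun x y h => hg x y ((hedges _).mp h)) ((isValley_iff_of_mem_edges_iff hedges).mpr hpz)
    ((isValley_iff_of_mem_edges_iff hedges).mpr hpz')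
  obtain ⟨m', hm'B, -, -, hm'⟩ :=
    (reverse_append A B ▸ hAB.reverse).exists_isValley_mem_support_left hne
      (fun x y h => hg x y ((hedges' _).mp h)) ((isValley_iff_of_mem_edges_iff hedges').mpr hpz)
      ((isValley_iff_of_mem_edges_iff hedges').mpr hpz')
  rw [support_reverse, List.mem_reverse] at hm'B
  have hmm' : m = m' := huniq m
    ((c.mem_support_rotate_iff z hz).mp (support_takeUntil_subset_support _ _ hmA)) m'
    ((c.mem_support_rotate_iff z hz).mp (support_dropUntil_subset_support _ _ hm'B))
    ((isValley_iff_of_mem_edges_iff hedges).mp hm) ((isValley_iff_of_mem_edges_iff hedges').mp hm')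
  subst hmm'
  rcases hAB.eq_or_eq_of_mem_support_append hmA hm'B with h | h
  exacts [hmz h, hmz' h]

theorem IsCycle.exists_isPath_around {v : V} {c : G.Walk v v} (hc : c.IsCycle) {s : V}
    (hs : s ∈ c.support) :
    ∃ (a b : V) (Q : G.Walk a b), Q.IsPath ∧ s ∉ Q.support ∧ a ≠ b ∧
      s(s, a) ∈ c.edges ∧ s(s, b) ∈ c.edges ∧ ∀ w, w ∈ c.support ↔ w = s ∨ w ∈ Q.support := by
  classical
  have hrot := hc.rotate hs
  have hedges : ∀ e, e ∈ (c.rotate s hs).edges ↔ e ∈ c.edges :=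
    fun e => (c.rotate_edges s hs).perm.mem_iff
  have hsupp : ∀ w, w ∈ (c.rotate s hs).support ↔ w ∈ c.support :=
    fun w => c.mem_support_rotate_iff s hs
  simp only [← hedges, ← hsupp]
  generalize c.rotate s hs = c' at hrot
  cases c' with
  | nil => exact absurd hrot not_isCycle_nil
  | cons hsa T =>
    have hne := hrot.snd_ne_penultimate
    have hT : ¬ T.Nil := by
      rw [← length_eq_zero_iff]; have := hrot.three_le_length; simp at this; omega
    rw [snd_cons, penultimate_cons_of_not_nil _ _ hT] at hne
    have hTsupp : T.support = T.dropLast.support ++ [s] := by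
      rw [support_dropLast hT, dropLast_support_concat]
    rw [cons_isCycle_iff, ← concat_dropLast (T.adj_penultimate hT),
      concat_isPath_iff] at hrot
    refine ⟨_, _, T.dropLast, hrot.1.1, hrot.1.2, hne, by simp, ?_, fun w => ?_⟩
    · rw [edges_cons, List.mem_cons, Sym2.eq_swap]
      exact Or.inr (T.mk_penultimate_end_mem_edges hT)
    · rw [support_cons, hTsupp]
      simp only [List.mem_cons, List.mem_append]
      tauto

end Walk

def IsBookEmbedding (G : SimpleGraph V) (f : V → ℕ) : Prop :=
  Function.Injective f ∧
    ∀ u v x y : V, G.Adj u v → G.Adj x y → ¬ (f u < f x ∧ f x < f v ∧ f v < f y)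

def UnderArc (f : V → ℕ) (p q y : V) : Prop :=
  f p < f y ∧ f y < f q ∨ f q < f y ∧ f y < f p

def ArcSeparates (f : V → ℕ) (p q x : V) (S : List V) : Prop :=
  x ≠ p ∧ x ≠ q ∧ ∀ w ∈ S, w ≠ p → w ≠ q → (UnderArc f p q w ↔ ¬ UnderArc f p q x)

variable {f : V → ℕ}

theorem ArcSeparates.notMem {p q x : V} {S : List V} (h : ArcSeparates f p q x S) :
    x ∉ S := fun hx => by
  have := h.2.2 x hx h.1 h.2.1
  tauto

/-- Of the three arcs from `s` to `a`, `b` and `x`, the middle one in the circular order of the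
spine separates the far ends of the other two. -/
theorem underArc_iff_not_of_underArc_iff {s a b x : V} (hf : Function.Injective f)
    (hsa : s ≠ a) (hsb : s ≠ b) (hsx : s ≠ x) (hab : a ≠ b) (hax : a ≠ x) (hbx : b ≠ x)
    (hb : UnderArc f s b a ↔ UnderArc f s b x) (hx : UnderArc f s x a ↔ UnderArc f s x b) :
    UnderArc f s a b ↔ ¬ UnderArc f s a x := by
  have := hf.ne hsa; have := hf.ne hsb; have := hf.ne hsx
  have := hf.ne hab; have := hf.ne hax; have := hf.ne hbx
  unfold UnderArc at *
  omega

namespace IsBookEmbedding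

theorem underArc_iff_of_adj (hf : G.IsBookEmbedding f) {p q x y : V} (hpq : G.Adj p q)
    (hxy : G.Adj x y) (hx : x ≠ p ∧ x ≠ q) (hy : y ≠ p ∧ y ≠ q) :
    UnderArc f p q x ↔ UnderArc f p q y := by
  obtain ⟨hinj, hcross⟩ := hf
  have := hcross p q x y hpq hxy; have := hcross p q y x hpq hxy.symm
  have := hcross q p x y hpq.symm hxy; have := hcross q p y x hpq.symm hxy.symm
  have := hcross x y p q hxy hpq; have := hcross y x p q hxy.symm hpq
  have := hcross x y q p hxy hpq.symm; have := hcross y x q p hxy.symm hpq.symm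
  have := hinj.ne hx.1; have := hinj.ne hx.2; have := hinj.ne hy.1; have := hinj.ne hy.2
  unfold UnderArc
  omega

theorem underArc_iff_of_walk (hf : G.IsBookEmbedding f) {p q x y : V} (hpq : G.Adj p q)
    (W : G.Walk x y) (hW : ∀ w ∈ W.support, w ≠ p ∧ w ≠ q) :
    UnderArc f p q x ↔ UnderArc f p q y := by
  induction W with
  | nil => rfl
  | cons hxy W ih =>
    rw [Walk.support_cons] at hW
    exact (hf.underArc_iff_of_adj hpq hxy (hW _ List.mem_cons_self)
      (hW _ (List.mem_cons_of_mem _ W.start_mem_support))).trans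
      (ih fun w hw => hW w (List.mem_cons_of_mem _ hw))

theorem underArc_iff_of_isPath (hf : G.IsBookEmbedding f) {s a b y : V} {Q : G.Walk a b}
    (hQ : Q.IsPath) (hs : s ∉ Q.support) (hsb : G.Adj s b) (hy : y ∈ Q.support) (hyb : y ≠ b) :
    UnderArc f s b y ↔ UnderArc f s b a := by
  classical
  refine (hf.underArc_iff_of_walk hsb (Q.takeUntil y hy) fun w hw => ⟨?_, ?_⟩).symm
  · exact ne_of_mem_of_not_mem (Q.support_takeUntil_subset_support hy hw) hs
  · rintro rfl
    exact Walk.endpoint_notMem_support_takeUntil hQ hy hyb.symm hw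

theorem arcSeparates_of_isPath (hf : G.IsBookEmbedding f) {s a b x : V} {Q : G.Walk a b}
    (hQ : Q.IsPath) (hs : s ∉ Q.support) (hab : a ≠ b) (hsa : G.Adj s a) (hsb : G.Adj s b)
    (hsx : G.Adj s x) (hx : x ∉ Q.support) :
    ArcSeparates f s a x Q.support ∨ ArcSeparates f s b x Q.support := by
  have hsa' : s ≠ a := (ne_of_mem_of_not_mem Q.start_mem_support hs).symm
  have hsb' : s ≠ b := (ne_of_mem_of_not_mem Q.end_mem_support hs).symm
  have hxa : x ≠ a := (ne_of_mem_of_not_mem Q.start_mem_support hx).symm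
  have hxb : x ≠ b := (ne_of_mem_of_not_mem Q.end_mem_support hx).symm
  have side_x : UnderArc f s x a ↔ UnderArc f s x b := hf.underArc_iff_of_walk hsx Q
    fun w hw => ⟨ne_of_mem_of_not_mem hw hs, ne_of_mem_of_not_mem hw hx⟩
  by_cases h : UnderArc f s b a ↔ UnderArc f s b x
  · have key :=
      underArc_iff_not_of_underArc_iff hf.1 hsa' hsb' hsx.ne hab hxa.symm hxb.symm h side_x
    refine Or.inl ⟨hsx.ne.symm, hxa, fun w hw _ hwa => ?_⟩
    exact (hf.underArc_iff_of_isPath hQ.reverse (by simpa using hs) hsa (by simpa using hw)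
      hwa).trans key
  · refine Or.inr ⟨hsx.ne.symm, hxb, fun w hw _ hwb => ?_⟩
    rw [hf.underArc_iff_of_isPath hQ hs hsb hw hwb]
    exact (not_iff.mp fun h' => h h'.symm).symm

theorem arcSeparates_of_dist_add_one_eq (hf : G.IsBookEmbedding f) (hconn : G.Connected)
    {p q x r s : V} {S : List V} (hpq : G.Adj p q)
    (hsep : ArcSeparates f p q x S) (hs : s = p ∨ s = q) (hdist : G.dist r x + 1 = G.dist r s) :
    ArcSeparates f p q r S := by
  obtain ⟨W, hW⟩ := hconn.exists_walk_length_eq_dist x r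
  by_cases hmeet : ∀ w ∈ W.support, w ≠ p ∧ w ≠ q
  · have hside := hf.underArc_iff_of_walk hpq W hmeet
    exact ⟨(hmeet r W.end_mem_support).1, (hmeet r W.end_mem_support).2,
      fun w hw hwp hwq => (hsep.2.2 w hw hwp hwq).trans (not_congr hside)⟩
  · exfalso
    simp only [not_forall, not_and_or, not_not] at hmeet
    obtain ⟨g, hg, hgpq⟩ := hmeet
    have hgx : g ≠ x := by rcases hgpq with rfl | rfl; exacts [hsep.1.symm, hsep.2.1.symm]
    have hlt := W.dist_lt_of_mem_support hW hg hgx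
    have hsg : s = g ∨ G.Adj g s := by
      rcases hs with rfl | rfl <;> rcases hgpq with rfl | rfl
      exacts [.inl rfl, .inr hpq.symm, .inr hpq, .inl rfl]
    rw [dist_comm (u := g), dist_comm (u := x)] at hlt
    rcases hsg with rfl | hsg
    · omega
    · rcases hsg.diff_dist_adj (u := r) with h | h | h <;> omega

theorem eq_of_arcSeparates (hf : G.IsBookEmbedding f) {p q p' q' x : V} {S : List V}
    (hpq : G.Adj p q) (hpq' : G.Adj p' q') (hp : p ∈ S) (hq : q ∈ S)
    (hp' : p' ∈ S) (hq' : q' ∈ S) (h : ArcSeparates f p q x S) (h' : ArcSeparates f p' q' x S) :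
    s(p, q) = s(p', q') := by
  have side : ∀ {p q : V}, ArcSeparates f p q x S → ∀ w ∈ S,
      f w = f p ∨ f w = f q ∨ (UnderArc f p q w ↔ ¬ UnderArc f p q x) := by
    intro p q h w hw
    by_cases hwp : w = p
    · exact Or.inl (congrArg f hwp)
    by_cases hwq : w = q
    · exact Or.inr (Or.inl (congrArg f hwq))
    exact Or.inr (Or.inr (h.2.2 w hw hwp hwq))
  have h1 := side h p' hp'; have h2 := side h q' hq'
  have h3 := side h' p hp; have h4 := side h' q hq
  have hcross : f p' ≠ f p → f p' ≠ f q → f q' ≠ f p → f q' ≠ f q →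
      (UnderArc f p q p' ↔ UnderArc f p q q') := fun h1 h2 h3 h4 =>
    hf.underArc_iff_of_adj hpq hpq' ⟨ne_of_apply_ne f h1, ne_of_apply_ne f h2⟩
      ⟨ne_of_apply_ne f h3, ne_of_apply_ne f h4⟩
  rw [Sym2.eq_iff, ← hf.1.eq_iff, ← hf.1.eq_iff (a := q), ← hf.1.eq_iff (a := p),
    ← hf.1.eq_iff (a := q)]
  unfold UnderArc at *
  omega

section Valley

variable {r v : V} {c : G.Walk v v}

theorem exists_arcSeparates_of_isValley (hf : G.IsBookEmbedding f) (hconn : G.Connected)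
    (hc : c.IsCycle)
    (hface : ∀ x y, x ∈ c.support → y ∈ c.support → G.Adj x y → s(x, y) ∈ c.edges)
    {s : V} (hs : s ∈ c.support) (hvalley : c.IsValley (G.dist r) s) (hd : G.dist r s ≠ 0) :
    ∃ t, s(s, t) ∈ c.edges ∧ ArcSeparates f s t r c.support := by
  obtain ⟨x, hsx, hdx⟩ := hconn.exists_adj_dist_add_one_eq hd
  have hxc : x ∉ c.support := fun hx => by
    have := hvalley x (hface s x hs hx hsx)
    omega
  obtain ⟨a, b, Q, hQ, hsQ, hab, hsa, hsb, hcQ⟩ := hc.exists_isPath_around hs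
  have lift : ∀ {t}, s(s, t) ∈ c.edges → ArcSeparates f s t x Q.support →
      ∃ t, s(s, t) ∈ c.edges ∧ ArcSeparates f s t r c.support := fun hst h =>
    ⟨_, hst, hf.arcSeparates_of_dist_add_one_eq hconn (c.adj_of_mem_edges hst)
      ⟨h.1, h.2.1, fun w hw hws => h.2.2 w (((hcQ w).mp hw).resolve_left hws) hws⟩
      (Or.inl rfl) hdx⟩
  rcases hf.arcSeparates_of_isPath hQ hsQ hab (c.adj_of_mem_edges hsa) (c.adj_of_mem_edges hsb)
    hsx fun h => hxc ((hcQ x).mpr (Or.inr h)) with h | h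
  exacts [lift hsa h, lift hsb h]

theorem isValley_dist_unique (hf : G.IsBookEmbedding f) (hconn : G.Connected) (hc : c.IsCycle)
    (hface : ∀ x y, x ∈ c.support → y ∈ c.support → G.Adj x y → s(x, y) ∈ c.edges) :
    ∀ s ∈ c.support, ∀ t ∈ c.support, c.IsValley (G.dist r) s → c.IsValley (G.dist r) t →
      s = t := by
  intro s hs t ht hvs hvt
  rcases eq_or_ne (G.dist r s) 0 with hs0 | hs0 <;> rcases eq_or_ne (G.dist r t) 0 with ht0 | ht0
  · exact (hconn.dist_eq_zero_iff.mp hs0).symm.trans (hconn.dist_eq_zero_iff.mp ht0)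
  · obtain ⟨_, -, hsep⟩ := hf.exists_arcSeparates_of_isValley hconn hc hface ht hvt ht0
    exact absurd ((hconn.dist_eq_zero_iff.mp hs0) ▸ hs) hsep.notMem
  · obtain ⟨_, -, hsep⟩ := hf.exists_arcSeparates_of_isValley hconn hc hface hs hvs hs0
    exact absurd ((hconn.dist_eq_zero_iff.mp ht0) ▸ ht) hsep.notMem
  · obtain ⟨s', hss', hsep⟩ := hf.exists_arcSeparates_of_isValley hconn hc hface hs hvs hs0
    obtain ⟨t', htt', hsep'⟩ := hf.exists_arcSeparates_of_isValley hconn hc hface ht hvt ht0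
    have heq := hf.eq_of_arcSeparates (c.adj_of_mem_edges hss') (c.adj_of_mem_edges htt') hs
      (c.snd_mem_support_of_mem_edges hss') ht (c.snd_mem_support_of_mem_edges htt') hsep hsep'
    by_contra hst
    have hedge : s(s, t) ∈ c.edges := by
      rw [Sym2.eq_iff] at heq
      rcases heq with ⟨rfl, -⟩ | ⟨rfl, rfl⟩
      exacts [absurd rfl hst, hss']
    have := hvs t hedge
    have := hvt s (Sym2.eq_swap ▸ hedge)
    omega

end Valley

end IsBookEmbedding

end SimpleGraph

/-- For a connected bipartite outerplanar graph `G` with root `r`, every bounded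
face cycle (equivalently, chordless cycle) `c` contains a unique vertex nearest
to `r`, and distances from `r` increase monotonically along both paths of `c`
from this nearest vertex to a unique farthest vertex. -/
theorem stmt17 (G : SimpleGraph V) (hout : IsOuterplanar G) (hbip : G.Colorable 2)
    (hconn : G.Connected) (r : V) (v : V) (c : G.Walk v v) (hc : c.IsCycle)
    (hface : ∀ x y : V, x ∈ c.support → y ∈ c.support → G.Adj x y →
      s(x, y) ∈ c.edges) :
    ∃ u ∈ c.support, ∃ z ∈ c.support,
      (∀ w ∈ c.support, w ≠ u → G.dist r u < G.dist r w) ∧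
      (∀ w ∈ c.support, w ≠ z → G.dist r w < G.dist r z) ∧
      (∀ w ∈ c.support, w ≠ u →
        ∃ x : V, s(w, x) ∈ c.edges ∧ G.dist r x < G.dist r w) ∧
      (∀ w ∈ c.support, w ≠ z →
        ∃ x : V, s(w, x) ∈ c.edges ∧ G.dist r w < G.dist r x) := by
  obtain ⟨f, hf⟩ : ∃ f, G.IsBookEmbedding f := hout
  have hstep : ∀ x y, s(x, y) ∈ c.edges → G.dist r x ≠ G.dist r y :=
    fun x y h => hconn.dist_ne_of_adj hbip r (c.adj_of_mem_edges h)
  have hvalley := hf.isValley_dist_unique (r := r) hconn hc hface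
  obtain ⟨u, hu, hmin, hdown⟩ := c.exists_forall_lt_of_isValley_unique hstep hvalley
  obtain ⟨z, hz, hmax, hup⟩ :=
    c.exists_forall_lt_of_isValley_unique (g := OrderDual.toDual ∘ G.dist r)
      (fun x y h => OrderDual.toDual.injective.ne (hstep x y h))
      (hc.isValley_toDual_unique hstep hvalley)
  exact ⟨u, hu, z, hz, hmin, hmax, hdown, hup⟩
end
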